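/- Graph-drift version of the value perturbation bound: let S and A be nonempty finite sets, γ ∈ [0,1), and let (R,P), (R',P') be MDPs on (S,A) with |R'(s,a)| ≤ R_max for all (s,a), and let Q*, Q*' be fixed points of their Bellman optimality operators. If for the constant κ = γ·R_max/(1−γ) one has max_{(s,a)} [ |R(s,a) − R'(s,a)| + κ · Σ_{s'} |P(s'|s,a) − P'(s'|s,a)| ] ≤ c·ΔG for some reals c ≥ 0 and ΔG ≥ 0, then ‖Q* − Q*'‖_∞ ≤ c·ΔG/(1−γ). -/

import Mathlib

open Finset

/-! The optimal value of the second MDP is bounded by `R_max/(1−γ)`, so replacing `P` by `P'`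
in the Bellman backup of `Q*'` costs at most `γ R_max/(1−γ) · Σ|P − P'|`. Together with
the reward change this is the drift term, while the backup under a stochastic `P` is a
`γ`-contraction. Hence `D = ‖Q* − Q*'‖` satisfies `D ≤ γ D + c ΔG`. -/

/-- The Bellman optimality operator for an MDP `(R, P)` on finite state/action
spaces with discount factor `γ`:
`(T Q)(s,a) = R(s,a) + γ · Σ_{s'} P(s'|s,a) · max_{a'} Q(s',a')`. -/
noncomputable def bellmanOp {S A : Type*} [Fintype S] [Fintype A] [Nonempty A]
    (γ : ℝ) (R : S → A → ℝ) (P : S → A → S → ℝ) (Q : S × A → ℝ) : S × A → ℝ :=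
  fun p =>
    R p.1 p.2 + γ * ∑ s' : S, P p.1 p.2 s' *
      (Finset.univ.sup' Finset.univ_nonempty (fun a' : A => Q (s', a')))

section SupBounds

variable {ι α : Type*} [AddCommGroup α] [LinearOrder α] [IsOrderedAddMonoid α]
  {s : Finset ι} (hs : s.Nonempty) {f g : ι → α} {M : α}

theorem Finset.sup'_sub_sup'_le (h : ∀ i ∈ s, f i - g i ≤ M) :
    s.sup' hs f - s.sup' hs g ≤ M := by
  rw [sub_le_iff_le_add]
  exact Finset.sup'_le _ _ fun i hi =>
    (sub_le_iff_le_add.1 (h i hi)).trans (add_le_add_right (Finset.le_sup' g hi) M)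

theorem Finset.abs_sup'_sub_sup'_le (h : ∀ i ∈ s, |f i - g i| ≤ M) :
    |s.sup' hs f - s.sup' hs g| ≤ M := by
  rw [abs_sub_le_iff]
  exact ⟨Finset.sup'_sub_sup'_le hs fun i hi => (abs_le.1 (h i hi)).2,
    Finset.sup'_sub_sup'_le hs fun i hi =>
      (abs_le.1 ((abs_sub_comm (g i) (f i)).trans_le (h i hi))).2⟩

end SupBounds

theorem abs_sum_mul_le_sum_abs_mul {ι : Type*} (s : Finset ι) (w f : ι → ℝ) {M : ℝ}
    (hf : ∀ i ∈ s, |f i| ≤ M) : |∑ i ∈ s, w i * f i| ≤ (∑ i ∈ s, |w i|) * M := by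
  rw [Finset.sum_mul]
  refine (Finset.abs_sum_le_sum_abs _ _).trans (Finset.sum_le_sum fun i hi => ?_)
  rw [abs_mul]
  exact mul_le_mul_of_nonneg_left (hf i hi) (abs_nonneg _)

theorem abs_sum_mul_le_of_stochastic {ι : Type*} [Fintype ι] {w f : ι → ℝ} {M : ℝ}
    (hw0 : ∀ i, 0 ≤ w i) (hw1 : ∑ i, w i = 1) (hf : ∀ i, |f i| ≤ M) :
    |∑ i, w i * f i| ≤ M := by
  have hw : ∑ i, |w i| = 1 := by simp_rw [abs_of_nonneg (hw0 _)]; exact hw1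
  simpa [hw] using abs_sum_mul_le_sum_abs_mul univ w f fun i _ => hf i

section Bellman

variable {S A : Type*} [Fintype S] [Fintype A] [Nonempty A]

noncomputable def maxValue (Q : S × A → ℝ) (s : S) : ℝ :=
  univ.sup' univ_nonempty fun a => Q (s, a)

theorem bellmanOp_apply (γ : ℝ) (R : S → A → ℝ) (P : S → A → S → ℝ) (Q : S × A → ℝ)
    (p : S × A) :
    bellmanOp γ R P Q p = R p.1 p.2 + γ * ∑ s', P p.1 p.2 s' * maxValue Q s' :=
  rfl

theorem abs_maxValue_sub_maxValue_le (Q Q' : S × A → ℝ) (s : S) :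
    |maxValue Q s - maxValue Q' s| ≤ ‖Q - Q'‖ :=
  Finset.abs_sup'_sub_sup'_le _ fun a _ => norm_le_pi_norm (Q - Q') (s, a)

theorem abs_maxValue_le (Q : S × A → ℝ) (s : S) : |maxValue Q s| ≤ ‖Q‖ := by
  simpa [maxValue, Finset.sup'_const] using abs_maxValue_sub_maxValue_le Q 0 s

variable {γ : ℝ} {R R' : S → A → ℝ} {P P' : S → A → S → ℝ}

theorem abs_bellmanOp_le (hγ0 : 0 ≤ γ) (hP0 : ∀ s a s', 0 ≤ P s a s')
    (hP1 : ∀ s a, ∑ s', P s a s' = 1) {Rmax : ℝ} (hR : ∀ s a, |R s a| ≤ Rmax) (Q : S × A → ℝ)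
    (p : S × A) : |bellmanOp γ R P Q p| ≤ Rmax + γ * ‖Q‖ := by
  have hbackup : |∑ s', P p.1 p.2 s' * maxValue Q s'| ≤ ‖Q‖ :=
    abs_sum_mul_le_of_stochastic (hP0 p.1 p.2) (hP1 p.1 p.2) (abs_maxValue_le Q)
  rw [bellmanOp_apply]
  calc _ ≤ |R p.1 p.2| + |γ * ∑ s', P p.1 p.2 s' * maxValue Q s'| := abs_add_le _ _
    _ = |R p.1 p.2| + γ * |∑ s', P p.1 p.2 s' * maxValue Q s'| := by
        rw [abs_mul, abs_of_nonneg hγ0]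
    _ ≤ Rmax + γ * ‖Q‖ := add_le_add (hR _ _) (mul_le_mul_of_nonneg_left hbackup hγ0)

theorem norm_le_of_bellmanOp_eq [Nonempty S] (hγ0 : 0 ≤ γ) (hP0 : ∀ s a s', 0 ≤ P s a s')
    (hP1 : ∀ s a, ∑ s', P s a s' = 1) (hγ1 : γ < 1) {Rmax : ℝ}
    (hR : ∀ s a, |R s a| ≤ Rmax) {Q : S × A → ℝ} (hQ : bellmanOp γ R P Q = Q) :
    ‖Q‖ ≤ Rmax / (1 - γ) := by
  have hQle : ‖Q‖ ≤ Rmax + γ * ‖Q‖ := (pi_norm_le_iff_of_nonempty _).2 fun p => by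
    simpa only [hQ, Real.norm_eq_abs] using abs_bellmanOp_le hγ0 hP0 hP1 hR Q p
  rw [le_div_iff₀ (sub_pos.2 hγ1)]
  linarith

theorem abs_bellmanOp_sub_bellmanOp_le (hγ0 : 0 ≤ γ) (hP0 : ∀ s a s', 0 ≤ P s a s')
    (hP1 : ∀ s a, ∑ s', P s a s' = 1) (Q Q' : S × A → ℝ) (p : S × A) :
    |bellmanOp γ R P Q p - bellmanOp γ R' P' Q' p|
      ≤ γ * ‖Q - Q'‖ + (|R p.1 p.2 - R' p.1 p.2|
          + γ * ‖Q'‖ * ∑ s', |P p.1 p.2 s' - P' p.1 p.2 s'|) := by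
  obtain ⟨s, a⟩ := p
  have hsplit : ∑ s', P s a s' * maxValue Q s' - ∑ s', P' s a s' * maxValue Q' s'
      = ∑ s', P s a s' * (maxValue Q s' - maxValue Q' s')
        + ∑ s', (P s a s' - P' s a s') * maxValue Q' s' := by
    rw [← sum_sub_distrib, ← sum_add_distrib]
    exact sum_congr rfl fun _ _ => by ring
  have hcontract : |∑ s', P s a s' * (maxValue Q s' - maxValue Q' s')| ≤ ‖Q - Q'‖ :=
    abs_sum_mul_le_of_stochastic (hP0 s a) (hP1 s a) (abs_maxValue_sub_maxValue_le Q Q')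
  have hmodel : |∑ s', (P s a s' - P' s a s') * maxValue Q' s'|
      ≤ (∑ s', |P s a s' - P' s a s'|) * ‖Q'‖ :=
    abs_sum_mul_le_sum_abs_mul _ _ _ fun s' _ => abs_maxValue_le Q' s'
  calc |bellmanOp γ R P Q (s, a) - bellmanOp γ R' P' Q' (s, a)|
      = |(R s a - R' s a) + γ * ∑ s', P s a s' * (maxValue Q s' - maxValue Q' s')
          + γ * ∑ s', (P s a s' - P' s a s') * maxValue Q' s'| := by
        rw [bellmanOp_apply, bellmanOp_apply]
        congr 1
        linear_combination γ * hsplit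
    _ ≤ |R s a - R' s a| + γ * |∑ s', P s a s' * (maxValue Q s' - maxValue Q' s')|
          + γ * |∑ s', (P s a s' - P' s a s') * maxValue Q' s'| := by
        refine (abs_add_three _ _ _).trans_eq ?_
        rw [abs_mul, abs_mul, abs_of_nonneg hγ0]
    _ ≤ |R s a - R' s a| + γ * ‖Q - Q'‖ + γ * ((∑ s', |P s a s' - P' s a s'|) * ‖Q'‖) := by
        gcongr
    _ = _ := by ring

end Bellman

theorem graph_drift_value_perturbation_general {S A : Type*} [Fintype S] [Fintype A]
    [Nonempty S] [Nonempty A]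
    (γ : ℝ) (hγ0 : 0 ≤ γ) (hγ1 : γ < 1)
    (R R' : S → A → ℝ) (P P' : S → A → S → ℝ)
    (hP0 : ∀ s a s', 0 ≤ P s a s') (hP1 : ∀ s a, ∑ s' : S, P s a s' = 1)
    (hP0' : ∀ s a s', 0 ≤ P' s a s') (hP1' : ∀ s a, ∑ s' : S, P' s a s' = 1)
    (Rmax : ℝ) (hR' : ∀ s a, |R' s a| ≤ Rmax)
    (Qstar Qstar' : S × A → ℝ)
    (hfix : bellmanOp γ R P Qstar = Qstar)
    (hfix' : bellmanOp γ R' P' Qstar' = Qstar')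
    (c ΔG : ℝ)
    (hdrift : Finset.univ.sup' Finset.univ_nonempty (fun p : S × A =>
        |R p.1 p.2 - R' p.1 p.2| +
          (γ * Rmax / (1 - γ)) * ∑ s' : S, |P p.1 p.2 s' - P' p.1 p.2 s'|)
        ≤ c * ΔG) :
    ‖Qstar - Qstar'‖ ≤ c * ΔG / (1 - γ) := by
  have hκ : γ * ‖Qstar'‖ ≤ γ * Rmax / (1 - γ) := by
    rw [mul_div_assoc]
    exact mul_le_mul_of_nonneg_left (norm_le_of_bellmanOp_eq hγ0 hP0' hP1' hγ1 hR' hfix') hγ0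
  have hstep : ‖Qstar - Qstar'‖ ≤ γ * ‖Qstar - Qstar'‖ + c * ΔG := by
    refine (pi_norm_le_iff_of_nonempty _).2 fun p => ?_
    have hmodel : |R p.1 p.2 - R' p.1 p.2|
        + γ * ‖Qstar'‖ * ∑ s', |P p.1 p.2 s' - P' p.1 p.2 s'| ≤ c * ΔG := by
      refine le_trans ?_ ((le_sup' _ (mem_univ p)).trans hdrift)
      gcongr
    calc ‖(Qstar - Qstar') p‖
        = |bellmanOp γ R P Qstar p - bellmanOp γ R' P' Qstar' p| := by
          rw [hfix, hfix', Pi.sub_apply, Real.norm_eq_abs]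
      _ ≤ γ * ‖Qstar - Qstar'‖ + c * ΔG :=
          (abs_bellmanOp_sub_bellmanOp_le hγ0 hP0 hP1 _ _ p).trans (by gcongr)
  rw [le_div_iff₀ (sub_pos.2 hγ1)]
  linarith

/-- Graph-drift version of the value perturbation bound. If, with
`κ = γ·R_max/(1−γ)`, the one-step model discrepancy
`max_{(s,a)} [ |R − R'| + κ · Σ_{s'} |P − P'| ]` is at most `c·ΔG`, then the
optimal value functions of the two MDPs satisfy
`‖Q* − Q*'‖_∞ ≤ c·ΔG/(1−γ)`. -/
theorem graph_drift_value_perturbation {S A : Type*} [Fintype S] [Fintype A]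
    [Nonempty S] [Nonempty A]
    (γ : ℝ) (hγ0 : 0 ≤ γ) (hγ1 : γ < 1)
    (R R' : S → A → ℝ) (P P' : S → A → S → ℝ)
    (hP0 : ∀ s a s', 0 ≤ P s a s') (hP1 : ∀ s a, ∑ s' : S, P s a s' = 1)
    (hP0' : ∀ s a s', 0 ≤ P' s a s') (hP1' : ∀ s a, ∑ s' : S, P' s a s' = 1)
    (Rmax : ℝ) (hR' : ∀ s a, |R' s a| ≤ Rmax)
    (Qstar Qstar' : S × A → ℝ)
    (hfix : bellmanOp γ R P Qstar = Qstar)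
    (hfix' : bellmanOp γ R' P' Qstar' = Qstar')
    (c ΔG : ℝ) (hc : 0 ≤ c) (hΔG : 0 ≤ ΔG)
    (hdrift : Finset.univ.sup' Finset.univ_nonempty (fun p : S × A =>
        |R p.1 p.2 - R' p.1 p.2| +
          (γ * Rmax / (1 - γ)) * ∑ s' : S, |P p.1 p.2 s' - P' p.1 p.2 s'|)
        ≤ c * ΔG) :
    ‖Qstar - Qstar'‖ ≤ c * ΔG / (1 - γ) :=
  graph_drift_value_perturbation_general γ hγ0 hγ1 R R' P P' hP0 hP1 hP0' hP1' Rmax hR' Qstar Qstar'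
    hfix hfix' c ΔG hdrift
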